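/- Let M be a finite Moufang loop and let x ∈ M with x ≠ 1 be such that x is adjacent in the undirected power graph of M to every other vertex. Let p be a prime dividing the order of some element of M (equivalently, a prime divisor of the exponent of M). Then every element of M of order p is a power of x, and M has exactly one subloop of order p, which is contained in the set of powers of x. -/

import Mathlib

namespace PowerGraphPaper

variable {M : Type*}

/-- Iterated power with respect to a binary operation `mul` and identity `one`:
`x ^ 0 = 1` and `x ^ (k+1) = x * x ^ k`. -/
def opow (mul : M → M → M) (one : M) (x : M) : ℕ → M
  | 0 => one
  | k + 1 => mul x (opow mul one x k)

/-- The order of an element: the least `k > 0` with `x ^ k = 1` (and `0` if there is none). -/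
noncomputable def oorder (mul : M → M → M) (one : M) (x : M) : ℕ :=
  sInf {k : ℕ | 0 < k ∧ opow mul one x k = one}

/-- The inverse of an element of a finite power-associative loop: `x ^ (|x| - 1)`. -/
noncomputable def oinv (mul : M → M → M) (one : M) (x : M) : M :=
  opow mul one x (oorder mul one x - 1)

/-- A subloop: a subset containing the identity and closed under multiplication and inverses. -/
def IsSubloop (mul : M → M → M) (one : M) (S : Set M) : Prop :=
  one ∈ S ∧ (∀ x ∈ S, ∀ y ∈ S, mul x y ∈ S) ∧ ∀ x ∈ S, oinv mul one x ∈ S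

/-- The multiplication is associative on the subset `S`. -/
def IsAssocOn (mul : M → M → M) (S : Set M) : Prop :=
  ∀ x ∈ S, ∀ y ∈ S, ∀ z ∈ S, mul (mul x y) z = mul x (mul y z)

/-- The multiplication is commutative on the subset `S`. -/
def IsCommOn (mul : M → M → M) (S : Set M) : Prop :=
  ∀ x ∈ S, ∀ y ∈ S, mul x y = mul y x

/-- A subset is cyclic if it is the set of powers of one of its elements. -/
def IsCyclicSubloop (mul : M → M → M) (one : M) (S : Set M) : Prop :=
  ∃ g ∈ S, S = {y | ∃ k : ℕ, opow mul one g k = y}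

/-- A loop structure on a type `M`: a binary operation all of whose left and right
translations are bijections, together with a two-sided identity. -/
structure LoopStr (M : Type*) where
  mul : M → M → M
  one : M
  mulLeft_bijective : ∀ a, Function.Bijective (mul a)
  mulRight_bijective : ∀ a, Function.Bijective (fun x => mul x a)
  one_mul : ∀ x, mul one x = x
  mul_one : ∀ x, mul x one = x

namespace LoopStr

/-- The Moufang identity `z(x(zy)) = ((zx)z)y`. -/
def IsMoufang (L : LoopStr M) : Prop :=
  ∀ x y z, L.mul z (L.mul x (L.mul z y)) = L.mul (L.mul (L.mul z x) z) y

/-- Powers in a loop. -/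
def pow (L : LoopStr M) : M → ℕ → M := opow L.mul L.one

/-- Order of an element of a loop. -/
noncomputable def order (L : LoopStr M) : M → ℕ := oorder L.mul L.one

/-- Inverse of an element of a loop. -/
noncomputable def inv (L : LoopStr M) : M → M := oinv L.mul L.one

/-- The multiplication of the loop is associative. -/
def IsAssociative (L : LoopStr M) : Prop :=
  ∀ x y z, L.mul (L.mul x y) z = L.mul x (L.mul y z)

/-- `M` is a cyclic group: the multiplication is associative and some element has
every element as a power. -/
def IsCyclicGroup (L : LoopStr M) : Prop :=
  L.IsAssociative ∧ ∃ g, ∀ x, ∃ k : ℕ, L.pow g k = x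

/-- `M` is a group isomorphic to a generalized quaternion group
`QuaternionGroup (2 ^ k)` (of order `2 ^ (k + 2)`) for some `k ≥ 1`. -/
def IsGeneralizedQuaternion (L : LoopStr M) : Prop :=
  ∃ k : ℕ, 1 ≤ k ∧ ∃ φ : M ≃ QuaternionGroup (2 ^ k),
    ∀ x y, φ (L.mul x y) = φ x * φ y

/-- `M` is a generalized octonion loop: it is nonassociative and every associative
commutative subloop is cyclic. -/
def IsGeneralizedOctonion (L : LoopStr M) : Prop :=
  ¬ L.IsAssociative ∧ ∀ S : Set M, IsSubloop L.mul L.one S →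
    IsAssocOn L.mul S → IsCommOn L.mul S → IsCyclicSubloop L.mul L.one S

/-- The undirected power graph of a loop: distinct `x` and `y` are adjacent iff one
is a power of the other. -/
def powerGraph (L : LoopStr M) : SimpleGraph M where
  Adj x y := x ≠ y ∧ ∃ k : ℕ, L.pow x k = y ∨ L.pow y k = x
  symm := by
    constructor
    rintro x y ⟨hne, k, hk⟩
    exact ⟨hne.symm, k, hk.symm⟩
  loopless := ⟨fun x h => h.1 rfl⟩

/-- The left translation by `a`, as a permutation. -/
noncomputable def leftTrans (L : LoopStr M) (a : M) : Equiv.Perm M :=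
  Equiv.ofBijective _ (L.mulLeft_bijective a)

/-- The right translation by `a`, as a permutation. -/
noncomputable def rightTrans (L : LoopStr M) (a : M) : Equiv.Perm M :=
  Equiv.ofBijective _ (L.mulRight_bijective a)

/-- The multiplication group of a loop: the group of permutations generated by all
left and right translations. -/
noncomputable def multGroup (L : LoopStr M) : Subgroup (Equiv.Perm M) :=
  Subgroup.closure (Set.range L.leftTrans ∪ Set.range L.rightTrans)

/-- An inner mapping: an element of the multiplication group fixing the identity. -/
def IsInnerMapping (L : LoopStr M) (φ : Equiv.Perm M) : Prop :=
  φ ∈ L.multGroup ∧ φ L.one = L.one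

end LoopStr

/-- The multiplication of the Chein double `M(G, 2)` of a group `G` with respect to a
central element `c ≠ 1`. -/
def cheinMul {G : Type*} [Group G] (c : G) (x y : G × ZMod 2) : G × ZMod 2 :=
  if x.2 = 0 then
    if y.2 = 0 then (x.1 * y.1, 0) else (y.1 * x.1, 1)
  else
    if y.2 = 0 then (x.1 * y.1⁻¹, 1) else (c * y.1⁻¹ * x.1, 0)

/-- The unique element of order `2` of the dicyclic group `QuaternionGroup m`
(for `m ≥ 1`), namely `a ^ m`. -/
def quatC (m : ℕ) : QuaternionGroup m := QuaternionGroup.a (m : ZMod (2 * m))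

end PowerGraphPaper

/-!
Powers in a Moufang loop obey `x ^ (a + b) = x ^ a * x ^ b`, so in a finite Moufang loop
`k ↦ x ^ k` identifies `⟨x⟩` with `ZMod |x|`, and subloops of `⟨x⟩` correspond to subgroups.

Let `x` dominate the power graph. An element `y` with `y ^ p = 1` is a power of `x`, or else
`x = y ^ k` with `p ∤ k`, and inverting `k` modulo `p` again makes `y` a power of `x`; in
particular `p ∣ |x|`. A subloop of order `p` either contains `x`, and is then `⟨x⟩` by counting,
or avoids `x`, and then none of its elements generates `x`, so all of them are powers of `x`.
Hence every subloop of order `p` lies in `⟨x⟩ ≅ ZMod |x|`, which has exactly one subgroup of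
order `p`.
-/

@[to_additive]
theorem IsCyclic.subgroup_eq_of_card_eq {G : Type*} [CommGroup G] [IsCyclic G] [Finite G]
    {H K : Subgroup G} (h : Nat.card H = Nat.card K) : H = K := by
  have eq_ker : ∀ H : Subgroup G, H = (powMonoidHom (Nat.card H) : G →* G).ker := fun H =>
    Subgroup.eq_of_le_of_card_ge
      (fun g hg => congrArg Subtype.val (pow_card_eq_one' (x := (⟨g, hg⟩ : H))))
      (by rw [IsCyclic.card_powMonoidHom_ker, Nat.gcd_eq_right H.card_subgroup_dvd_card])
  rw [eq_ker H, eq_ker K, h]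

namespace PowerGraphPaper.LoopStr

variable {M : Type*} (L : LoopStr M)

lemma pow_zero (x : M) : L.pow x 0 = L.one := rfl

lemma pow_succ (x : M) (k : ℕ) : L.pow x (k + 1) = L.mul x (L.pow x k) := rfl

lemma pow_one (x : M) : L.pow x 1 = x := L.mul_one x

lemma one_pow (k : ℕ) : L.pow L.one k = L.one := by
  induction k with
  | zero => rfl
  | succ k ih => rw [pow_succ, ih, L.one_mul]

lemma pow_sub_eq_one_of_pow_eq (x : M) {i j : ℕ} (hij : i ≤ j) (h : L.pow x i = L.pow x j) :
    L.pow x (j - i) = L.one := by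
  induction i generalizing j with
  | zero => exact h.symm
  | succ i ih =>
    obtain ⟨j, rfl⟩ : ∃ j', j = j' + 1 := ⟨j - 1, by omega⟩
    simpa using ih (by omega) ((L.mulLeft_bijective x).injective h)

def powers (x : M) : Set M := {y | ∃ k, L.pow x k = y}

variable {L}

lemma pow_mem_of_mul_mem {S : Set M} (one_mem : L.one ∈ S)
    (mul_mem : ∀ a ∈ S, ∀ b ∈ S, L.mul a b ∈ S) {z : M} (hz : z ∈ S) (k : ℕ) :
    L.pow z k ∈ S := by
  induction k with
  | zero => exact one_mem
  | succ k ih => exact mul_mem z hz _ ih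

/-- Inverses are powers, so closure under inverses is automatic. -/
lemma isSubloop_of_mul_mem {S : Set M} (one_mem : L.one ∈ S)
    (mul_mem : ∀ a ∈ S, ∀ b ∈ S, L.mul a b ∈ S) : IsSubloop L.mul L.one S :=
  ⟨one_mem, mul_mem, fun _ ha => pow_mem_of_mul_mem one_mem mul_mem ha _⟩

lemma _root_.PowerGraphPaper.IsSubloop.powers_subset {S : Set M}
    (hS : IsSubloop L.mul L.one S) {z : M} (hz : z ∈ S) : L.powers z ⊆ S := by
  rintro _ ⟨k, rfl⟩
  exact pow_mem_of_mul_mem hS.1 hS.2.1 hz k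

namespace IsMoufang

variable (hM : L.IsMoufang)
include hM

lemma flexible (a b : M) : L.mul a (L.mul b a) = L.mul (L.mul a b) a := by
  simpa [L.mul_one] using hM b L.one a

lemma pow_succ' (x : M) (k : ℕ) : L.pow x (k + 1) = L.mul (L.pow x k) x := by
  induction k with
  | zero => rw [pow_one, pow_zero, L.one_mul]
  | succ k ih =>
    conv_lhs => rw [pow_succ, ih, hM.flexible]
    rfl

/-- The Moufang identity with `z = x` raises both exponents by one at once. -/
lemma pow_add (x : M) (a b : ℕ) : L.pow x (a + b) = L.mul (L.pow x a) (L.pow x b) := by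
  induction a using Nat.strong_induction_on generalizing b with
  | _ a ih =>
    match a, b with
    | 0, b => rw [pow_zero, L.one_mul, Nat.zero_add]
    | a + 1, 0 => rw [pow_zero, L.mul_one]
    | 1, b + 1 => rw [pow_one, Nat.add_comm, pow_succ]
    | a + 2, b + 1 =>
      have h := hM (L.pow x a) (L.pow x (b + 1)) x
      rw [← pow_succ, ← pow_succ, ← hM.pow_succ', ← ih a (by omega), ← pow_succ] at h
      rw [← h, show a + 2 + (b + 1) = a + (b + 2) + 1 by omega]

lemma pow_mul (x : M) (a b : ℕ) : L.pow x (a * b) = L.pow (L.pow x a) b := by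
  induction b with
  | zero => rfl
  | succ b ih => rw [Nat.mul_succ, Nat.add_comm, hM.pow_add, ih, ← pow_succ]

lemma pow_mod_of_pow_eq_one {x : M} {n : ℕ} (hn : L.pow x n = L.one) (k : ℕ) :
    L.pow x (k % n) = L.pow x k := by
  conv_rhs => rw [← Nat.div_add_mod k n]
  rw [hM.pow_add, hM.pow_mul, hn, one_pow, L.one_mul]

end IsMoufang

lemma pow_ne_one_of_lt_order {x : M} {k : ℕ} (h0 : 0 < k) (hk : k < L.order x) :
    L.pow x k ≠ L.one :=
  fun h => (Nat.sInf_le ⟨h0, h⟩ : L.order x ≤ k).not_gt hk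

section Finite

variable [Finite M]

variable (L) in
lemma exists_pow_eq_one (x : M) : ∃ k, 0 < k ∧ L.pow x k = L.one := by
  obtain ⟨i, j, hne, h⟩ := Finite.exists_ne_map_eq_of_infinite (L.pow x)
  rcases Nat.lt_or_gt_of_ne hne with hij | hij
  · exact ⟨j - i, by omega, L.pow_sub_eq_one_of_pow_eq x hij.le h⟩
  · exact ⟨i - j, by omega, L.pow_sub_eq_one_of_pow_eq x hij.le h.symm⟩

variable (L) in
lemma order_pos (x : M) : 0 < L.order x :=
  (Nat.sInf_mem (L.exists_pow_eq_one x)).1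

variable (L) in
lemma pow_order (x : M) : L.pow x (L.order x) = L.one :=
  (Nat.sInf_mem (L.exists_pow_eq_one x)).2

lemma IsMoufang.order_dvd_of_pow_eq_one (hM : L.IsMoufang) {x : M} {k : ℕ}
    (h : L.pow x k = L.one) : L.order x ∣ k := by
  refine Nat.dvd_of_mod_eq_zero (Nat.eq_zero_of_not_pos fun hpos => ?_)
  exact pow_ne_one_of_lt_order hpos (Nat.mod_lt _ (L.order_pos x))
    (by rw [hM.pow_mod_of_pow_eq_one (L.pow_order x), h])

lemma IsMoufang.exists_ne_one_pow_eq_one_of_dvd_order (hM : L.IsMoufang) {y : M} {p : ℕ}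
    (hp : 1 < p) (hpy : p ∣ L.order y) : ∃ z, z ≠ L.one ∧ L.pow z p = L.one := by
  have hy := L.order_pos y
  refine ⟨L.pow y (L.order y / p), pow_ne_one_of_lt_order ?_ (Nat.div_lt_self hy hp), ?_⟩
  · exact Nat.div_pos (Nat.le_of_dvd hy hpy) (by omega)
  · rw [← hM.pow_mul, Nat.div_mul_cancel hpy, L.pow_order]

instance (x : M) : NeZero (L.order x) := ⟨(L.order_pos x).ne'⟩

variable (L) in
/-- `k ↦ x ^ k`, which identifies `⟨x⟩` with the cyclic group `ZMod |x|`. -/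
noncomputable def zmodPow (x : M) (k : ZMod (L.order x)) : M := L.pow x k.val

variable (L) in
lemma zmodPow_injective (x : M) : Function.Injective (L.zmodPow x) := by
  have key : ∀ {a b : ZMod (L.order x)}, a.val < b.val → L.zmodPow x a ≠ L.zmodPow x b :=
    fun {a b} hab h => pow_ne_one_of_lt_order (Nat.sub_pos_of_lt hab)
      ((Nat.sub_le _ _).trans_lt (ZMod.val_lt b)) (L.pow_sub_eq_one_of_pow_eq x hab.le h)
  intro a b h
  rcases lt_trichotomy a.val b.val with hab | hab | hab
  · exact (key hab h).elim
  · exact ZMod.val_injective _ hab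
  · exact (key hab h.symm).elim

lemma ncard_image_zmodPow (x : M) (H : AddSubgroup (ZMod (L.order x))) :
    (L.zmodPow x '' H).ncard = Nat.card H := by
  rw [Set.ncard_image_of_injective _ (L.zmodPow_injective x)]
  exact (Nat.card_coe_set_eq (H : Set (ZMod (L.order x)))).symm

namespace IsMoufang

variable (hM : L.IsMoufang)
include hM

lemma zmodPow_add (x : M) (a b : ZMod (L.order x)) :
    L.zmodPow x (a + b) = L.mul (L.zmodPow x a) (L.zmodPow x b) := by
  rw [zmodPow, ZMod.val_add, hM.pow_mod_of_pow_eq_one (L.pow_order x), hM.pow_add]; rfl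

lemma range_zmodPow (x : M) : Set.range (L.zmodPow x) = L.powers x := by
  ext y
  constructor
  · rintro ⟨k, rfl⟩
    exact ⟨k.val, rfl⟩
  · rintro ⟨k, rfl⟩
    refine ⟨k, ?_⟩
    rw [zmodPow, ZMod.val_natCast, hM.pow_mod_of_pow_eq_one (L.pow_order x)]

lemma isSubloop_image_zmodPow (x : M) (H : AddSubgroup (ZMod (L.order x))) :
    IsSubloop L.mul L.one (L.zmodPow x '' H) := by
  refine isSubloop_of_mul_mem ⟨0, H.zero_mem, by rw [zmodPow, ZMod.val_zero]; rfl⟩ ?_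
  rintro _ ⟨a, ha, rfl⟩ _ ⟨b, hb, rfl⟩
  exact ⟨a + b, H.add_mem ha hb, hM.zmodPow_add x a b⟩

def zmodPowPreimage (x : M) {S : Set M} (hS : IsSubloop L.mul L.one S) :
    AddSubgroup (ZMod (L.order x)) :=
  let N : AddSubmonoid (ZMod (L.order x)) :=
    { carrier := L.zmodPow x ⁻¹' S
      zero_mem' := by
        show L.pow x (ZMod.val 0) ∈ S
        rw [ZMod.val_zero]
        exact hS.1
      add_mem' := fun {a b} ha hb => by
        show L.zmodPow x (a + b) ∈ S
        rw [hM.zmodPow_add]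
        exact hS.2.1 _ ha _ hb }
  { N with
    neg_mem' := fun {a} ha => AddSubmonoid.multiples_le.2 ha
      (mem_multiples_iff_mem_zmultiples.2 (neg_mem (AddSubgroup.mem_zmultiples a))) }

lemma image_zmodPowPreimage (x : M) {S : Set M} (hS : IsSubloop L.mul L.one S)
    (hSx : S ⊆ L.powers x) : L.zmodPow x '' (hM.zmodPowPreimage x hS) = S :=
  Set.image_preimage_eq_of_subset (hM.range_zmodPow x ▸ hSx)

lemma eq_of_subset_powers_of_ncard_eq (x : M) {S T : Set M} (hS : IsSubloop L.mul L.one S)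
    (hT : IsSubloop L.mul L.one T) (hSx : S ⊆ L.powers x) (hTx : T ⊆ L.powers x)
    (hcard : S.ncard = T.ncard) : S = T := by
  rw [← hM.image_zmodPowPreimage x hS hSx, ← hM.image_zmodPowPreimage x hT hTx] at hcard ⊢
  rw [ncard_image_zmodPow, ncard_image_zmodPow] at hcard
  rw [IsAddCyclic.addSubgroup_eq_of_card_eq hcard]

lemma exists_isSubloop_ncard_eq_of_dvd_order {x : M} {p : ℕ} (hp : p.Prime)
    (hpx : p ∣ L.order x) : ∃ S : Set M, IsSubloop L.mul L.one S ∧ S.ncard = p := by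
  have := Fact.mk hp
  obtain ⟨g, hg⟩ := exists_prime_addOrderOf_dvd_card p ((ZMod.card (L.order x)).symm ▸ hpx)
  exact ⟨_, hM.isSubloop_image_zmodPow x (AddSubgroup.zmultiples g),
    by rw [ncard_image_zmodPow, Nat.card_zmultiples, hg]⟩

lemma ncard_powers (x : M) : (L.powers x).ncard = L.order x := by
  rw [← hM.range_zmodPow, Set.ncard_range_of_injective (L.zmodPow_injective x), Nat.card_zmod]

end IsMoufang

end Finite

namespace IsMoufang

variable (hM : L.IsMoufang) {x : M} (hadj : ∀ y : M, y ≠ x → L.powerGraph.Adj x y)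
include hM hadj

/-- If `x = y ^ k`, then `p ∣ k` would force `x = 1`; otherwise `k` is invertible modulo `p`,
so `y` is a power of `x`. -/
lemma mem_powers_of_pow_prime_eq_one (hx1 : x ≠ L.one) {p : ℕ} (hp : p.Prime) {y : M}
    (hyp : L.pow y p = L.one) : y ∈ L.powers x := by
  by_cases hyx : y = x
  · exact ⟨1, by rw [L.pow_one, hyx]⟩
  obtain ⟨-, k, hk | hk⟩ := hadj y hyx
  · exact ⟨k, hk⟩
  have hpk : ¬ p ∣ k := by
    rintro ⟨c, rfl⟩
    rw [hM.pow_mul, hyp, one_pow] at hk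
    exact hx1 hk.symm
  obtain ⟨m, -, hm⟩ := Nat.exists_mul_mod_eq_one_of_coprime
    (Nat.coprime_comm.1 (hp.coprime_iff_not_dvd.2 hpk)) hp.one_lt
  refine ⟨m, ?_⟩
  rw [← hk, ← hM.pow_mul, ← hM.pow_mod_of_pow_eq_one hyp, hm, L.pow_one]

lemma prime_dvd_order_of_dvd_order [Finite M] (hx1 : x ≠ L.one) {p : ℕ} (hp : p.Prime) {y : M}
    (hpy : p ∣ L.order y) : p ∣ L.order x := by
  obtain ⟨z, hz1, hzp⟩ := hM.exists_ne_one_pow_eq_one_of_dvd_order hp.one_lt hpy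
  obtain ⟨k, rfl⟩ := hM.mem_powers_of_pow_prime_eq_one hadj hx1 hp hzp
  have hxk : ¬ L.order x ∣ k := by
    rintro ⟨c, rfl⟩
    rw [hM.pow_mul, L.pow_order, one_pow] at hz1
    exact hz1 rfl
  rw [← hM.pow_mul] at hzp
  by_contra hpx
  exact hxk (Nat.Coprime.dvd_of_dvd_mul_right (Nat.coprime_comm.1 (hp.coprime_iff_not_dvd.2 hpx))
    (hM.order_dvd_of_pow_eq_one hzp))

/-- A subloop containing `x` contains `⟨x⟩`; one avoiding `x` consists of elements adjacent to
`x` none of which generates `x`. -/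
lemma subset_powers_of_isSubloop [Finite M] {S : Set M} (hS : IsSubloop L.mul L.one S)
    (hcard : S.ncard ≤ L.order x) : S ⊆ L.powers x := by
  by_cases hxS : x ∈ S
  · exact (Set.eq_of_subset_of_ncard_le (hS.powers_subset hxS)
      (hcard.trans (hM.ncard_powers x).ge)).ge
  · intro s hs
    obtain ⟨-, k, hk | hk⟩ := hadj s (ne_of_mem_of_not_mem hs hxS)
    · exact ⟨k, hk⟩
    · exact absurd (hk ▸ pow_mem_of_mul_mem hS.1 hS.2.1 hs k) hxS

end IsMoufang

end PowerGraphPaper.LoopStr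

/-- **Lemma.** If a non-identity vertex `x` of the power graph of a finite Moufang loop
is adjacent to all other vertices and `p` divides the order of some element, then every
element of order `p` is a power of `x` and there is a unique subloop of order `p`,
contained in the powers of `x`. -/
theorem PowerGraphPaper.dominating_vertex_unique_subloop
    {M : Type*} [Fintype M] (L : LoopStr M) (hM : L.IsMoufang)
    (x : M) (hx1 : x ≠ L.one)
    (hadj : ∀ y : M, y ≠ x → L.powerGraph.Adj x y)
    (p : ℕ) (hp : p.Prime) (hdvd : ∃ y : M, p ∣ L.order y) :
    (∀ y : M, L.order y = p → ∃ k : ℕ, L.pow x k = y) ∧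
    (∃! S : Set M, IsSubloop L.mul L.one S ∧ S.ncard = p) ∧
    (∀ S : Set M, IsSubloop L.mul L.one S → S.ncard = p →
      S ⊆ {y : M | ∃ k : ℕ, L.pow x k = y}) := by
  obtain ⟨y, hpy⟩ := hdvd
  have hpx : p ∣ L.order x := hM.prime_dvd_order_of_dvd_order hadj hx1 hp hpy
  have hsub : ∀ S : Set M, IsSubloop L.mul L.one S → S.ncard = p → S ⊆ L.powers x :=
    fun S hS hcard => hM.subset_powers_of_isSubloop hadj hS
      (hcard ▸ Nat.le_of_dvd (L.order_pos x) hpx)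
  obtain ⟨T, hT, hTcard⟩ := hM.exists_isSubloop_ncard_eq_of_dvd_order hp hpx
  refine ⟨fun y hy => ?_, ⟨T, ⟨hT, hTcard⟩, fun S ⟨hS, hScard⟩ => ?_⟩, hsub⟩
  · exact hM.mem_powers_of_pow_prime_eq_one hadj hx1 hp (hy ▸ L.pow_order y)
  · exact hM.eq_of_subset_powers_of_ncard_eq x hS hT (hsub S hS hScard) (hsub T hT hTcard)
      (hScard.trans hTcard.symm)
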